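/- Let $(\mathcal{G}_1, \mathcal{G}_2)$ be a matched pair of groupoids with 2-cocycles $c_1$ on $\mathcal{G}_1$ and $c_2$ on $\mathcal{G}_2$, and let $\varphi: \mathcal{G}_2 \tensor[_s]{\times}{_r} \mathcal{G}_1 \to \mathbb{T}$ be a cocycle connector for $(c_1, c_2)$. Then the map $c: (\mathcal{G}_1\bowtie\mathcal{G}_2)^{(2)} \to \mathbb{T}$ given by $c\bigl((x_1,g_1),(x_2,g_2)\bigr) = c_1(x_1, g_1\triangleright x_2)\,\varphi(g_1,x_2)\, c_2(g_1\triangleleft x_2, g_2)$ is a normalized 2-cocycle on $\mathcal{G}_1\bowtie\mathcal{G}_2$. -/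
import Mathlib


/-- A (discrete, algebraic) groupoid over a unit space `U`, with arrows `G`.
The multiplication and inversion are given as total functions; all axioms are
conditioned on composability `s g = r h`. -/
structure Gpd (U : Type*) (G : Type*) where
  r : G → U
  s : G → U
  mul : G → G → G
  inv : G → G
  unit : U → G
  r_unit : ∀ u, r (unit u) = u
  s_unit : ∀ u, s (unit u) = u
  r_mul : ∀ g h, s g = r h → r (mul g h) = r g
  s_mul : ∀ g h, s g = r h → s (mul g h) = s h
  mul_assoc : ∀ g h k, s g = r h → s h = r k → mul (mul g h) k = mul g (mul h k)
  unit_mul : ∀ g, mul (unit (r g)) g = g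
  mul_unit : ∀ g, mul g (unit (s g)) = g
  r_inv : ∀ g, r (inv g) = s g
  s_inv : ∀ g, s (inv g) = r g
  mul_inv : ∀ g, mul g (inv g) = unit (r g)
  inv_mul : ∀ g, mul (inv g) g = unit (s g)

/-- A matched pair of groupoids `(𝒢₁, 𝒢₂)` over a common unit space `U`:
an action map `act = ▷ : 𝒢₂ ×ₛᵣ 𝒢₁ → 𝒢₁` and a restriction map
`res = ◁ : 𝒢₂ ×ₛᵣ 𝒢₁ → 𝒢₂` satisfying (ZS1)–(ZS9). -/
structure MatchedPair {U G₁ G₂ : Type*} (𝒢₁ : Gpd U G₁) (𝒢₂ : Gpd U G₂) where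
  act : G₂ → G₁ → G₁
  res : G₂ → G₁ → G₂
  zs1 : ∀ h g x, 𝒢₂.s h = 𝒢₂.r g → 𝒢₂.s g = 𝒢₁.r x →
    act (𝒢₂.mul h g) x = act h (act g x)
  zs2 : ∀ g x, 𝒢₂.s g = 𝒢₁.r x → 𝒢₁.r (act g x) = 𝒢₂.r g
  zs3 : ∀ x, act (𝒢₂.unit (𝒢₁.r x)) x = x
  zs4 : ∀ g x y, 𝒢₂.s g = 𝒢₁.r x → 𝒢₁.s x = 𝒢₁.r y →
    res g (𝒢₁.mul x y) = res (res g x) y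
  zs5 : ∀ g x, 𝒢₂.s g = 𝒢₁.r x → 𝒢₂.s (res g x) = 𝒢₁.s x
  zs6 : ∀ g, res g (𝒢₁.unit (𝒢₂.s g)) = g
  zs7 : ∀ g x, 𝒢₂.s g = 𝒢₁.r x → 𝒢₁.s (act g x) = 𝒢₂.r (res g x)
  zs8 : ∀ g x y, 𝒢₂.s g = 𝒢₁.r x → 𝒢₁.s x = 𝒢₁.r y →
    act g (𝒢₁.mul x y) = 𝒢₁.mul (act g x) (act (res g x) y)
  zs9 : ∀ h g x, 𝒢₂.s h = 𝒢₂.r g → 𝒢₂.s g = 𝒢₁.r x →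
    res (𝒢₂.mul h g) x = 𝒢₂.mul (res h (act g x)) (res g x)

variable {U G₁ G₂ : Type*}

/-- The Zappa–Szép multiplication `(x₁,g₁)(x₂,g₂) = (x₁(g₁ ▷ x₂), (g₁ ◁ x₂)g₂)`
on `G₁ × G₂`. -/
def zsMul (𝒢₁ : Gpd U G₁) (𝒢₂ : Gpd U G₂) (M : MatchedPair 𝒢₁ 𝒢₂)
    (p q : G₁ × G₂) : G₁ × G₂ :=
  (𝒢₁.mul p.1 (M.act p.2 q.1), 𝒢₂.mul (M.res p.2 q.1) q.2)

/-- The candidate 2-cocycle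
`c((x₁,g₁),(x₂,g₂)) = c₁(x₁, g₁ ▷ x₂) φ(g₁,x₂) c₂(g₁ ◁ x₂, g₂)` on `𝒢₁ ⋈ 𝒢₂`. -/
noncomputable def zsCocycle (𝒢₁ : Gpd U G₁) (𝒢₂ : Gpd U G₂) (M : MatchedPair 𝒢₁ 𝒢₂)
    (c₁ : G₁ → G₁ → Circle) (c₂ : G₂ → G₂ → Circle) (φ : G₂ → G₁ → Circle)
    (p q : G₁ × G₂) : Circle :=
  c₁ p.1 (M.act p.2 q.1) * φ p.2 q.1 * c₂ (M.res p.2 q.1) q.2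

/-- An idempotent arrow in a groupoid is a unit. -/
lemma Gpd.idem_eq_unit {U G : Type*} (𝒢 : Gpd U G) (g : G)
    (hs : 𝒢.s g = 𝒢.r g) (h : 𝒢.mul g g = g) : g = 𝒢.unit (𝒢.s g) := by
  calc g = 𝒢.mul (𝒢.unit (𝒢.s g)) g := by rw [hs, 𝒢.unit_mul]
    _ = 𝒢.mul (𝒢.mul (𝒢.inv g) g) g := by rw [𝒢.inv_mul]
    _ = 𝒢.mul (𝒢.inv g) (𝒢.mul g g) := 𝒢.mul_assoc _ _ _ (𝒢.s_inv g) hs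
    _ = 𝒢.mul (𝒢.inv g) g := by rw [h]
    _ = 𝒢.unit (𝒢.s g) := 𝒢.inv_mul g

/-- The restriction of a unit along an arrow is a unit. -/
lemma MatchedPair.res_unit {U G₁ G₂ : Type*} {𝒢₁ : Gpd U G₁} {𝒢₂ : Gpd U G₂}
    (M : MatchedPair 𝒢₁ 𝒢₂) (x : G₁) :
    M.res (𝒢₂.unit (𝒢₁.r x)) x = 𝒢₂.unit (𝒢₁.s x) := by
  set e := 𝒢₂.unit (𝒢₁.r x) with he
  have hse : 𝒢₂.s e = 𝒢₁.r x := 𝒢₂.s_unit _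
  have hre : 𝒢₂.r e = 𝒢₁.r x := 𝒢₂.r_unit _
  have hee : 𝒢₂.mul e e = e := by
    have := 𝒢₂.unit_mul e
    rwa [hre, ← he] at this
  have hact : M.act e x = x := M.zs3 x
  have hidem : M.res e x = 𝒢₂.mul (M.res e x) (M.res e x) := by
    have h9 := M.zs9 e e x (by rw [hse, hre]) hse
    rw [hee, hact] at h9
    exact h9
  have hr : 𝒢₂.r (M.res e x) = 𝒢₁.s x := by
    have := M.zs7 e x hse
    rw [hact] at this
    exact this.symm
  have hsr : 𝒢₂.s (M.res e x) = 𝒢₁.s x := M.zs5 e x hse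
  have := 𝒢₂.idem_eq_unit (M.res e x) (hsr.trans hr.symm) hidem.symm
  rw [hsr] at this
  exact this

/-- The action of an arrow on a unit is a unit. -/
lemma MatchedPair.act_unit {U G₁ G₂ : Type*} {𝒢₁ : Gpd U G₁} {𝒢₂ : Gpd U G₂}
    (M : MatchedPair 𝒢₁ 𝒢₂) (g : G₂) :
    M.act g (𝒢₁.unit (𝒢₂.s g)) = 𝒢₁.unit (𝒢₂.r g) := by
  set u := 𝒢₁.unit (𝒢₂.s g) with hu
  have hsg : 𝒢₂.s g = 𝒢₁.r u := (𝒢₁.r_unit _).symm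
  have hsu : 𝒢₁.s u = 𝒢₁.r u := (𝒢₁.s_unit _).trans (𝒢₁.r_unit _).symm
  have huu : 𝒢₁.mul u u = u := by
    have := 𝒢₁.unit_mul u
    rwa [𝒢₁.r_unit, ← hu] at this
  have hres : M.res g u = g := M.zs6 g
  have hidem : M.act g u = 𝒢₁.mul (M.act g u) (M.act g u) := by
    have h8 := M.zs8 g u u hsg hsu
    rw [huu, hres] at h8
    exact h8
  have hrᵤ : 𝒢₁.r (M.act g u) = 𝒢₂.r g := M.zs2 g u hsg
  have hsᵤ : 𝒢₁.s (M.act g u) = 𝒢₂.r g := by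
    have := M.zs7 g u hsg
    rw [hres] at this
    exact this
  have := 𝒢₁.idem_eq_unit (M.act g u) (hsᵤ.trans hrᵤ.symm) hidem.symm
  rw [hsᵤ] at this
  exact this

/-- If `φ` is a cocycle connector for normalized 2-cocycles
`(c₁, c₂)` on a matched pair `(𝒢₁, 𝒢₂)`, then
`c((x₁,g₁),(x₂,g₂)) = c₁(x₁, g₁ ▷ x₂) φ(g₁,x₂) c₂(g₁ ◁ x₂, g₂)` is a normalized
2-cocycle on the Zappa–Szép product `𝒢₁ ⋈ 𝒢₂`. -/
theorem zs_cocycle_of_connector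
    (𝒢₁ : Gpd U G₁) (𝒢₂ : Gpd U G₂) (M : MatchedPair 𝒢₁ 𝒢₂)
    (c₁ : G₁ → G₁ → Circle) (c₂ : G₂ → G₂ → Circle)
    -- `c₁`, `c₂` are normalized 2-cocycles:
    (h1norm₁ : ∀ x, c₁ (𝒢₁.unit (𝒢₁.r x)) x = 1)
    (h1norm₂ : ∀ x, c₁ x (𝒢₁.unit (𝒢₁.s x)) = 1)
    (h1coc : ∀ x y z, 𝒢₁.s x = 𝒢₁.r y → 𝒢₁.s y = 𝒢₁.r z →
      c₁ x (𝒢₁.mul y z) * c₁ y z = c₁ (𝒢₁.mul x y) z * c₁ x y)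
    (h2norm₁ : ∀ g, c₂ (𝒢₂.unit (𝒢₂.r g)) g = 1)
    (h2norm₂ : ∀ g, c₂ g (𝒢₂.unit (𝒢₂.s g)) = 1)
    (h2coc : ∀ g h k, 𝒢₂.s g = 𝒢₂.r h → 𝒢₂.s h = 𝒢₂.r k →
      c₂ g (𝒢₂.mul h k) * c₂ h k = c₂ (𝒢₂.mul g h) k * c₂ g h)
    -- `φ` is a cocycle connector for `(c₁, c₂)`:
    (φ : G₂ → G₁ → Circle)
    (hCC1 : (∀ x, φ (𝒢₂.unit (𝒢₁.r x)) x = 1) ∧ (∀ g, φ g (𝒢₁.unit (𝒢₂.s g)) = 1))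
    (hCC2 : ∀ g x y, 𝒢₂.s g = 𝒢₁.r x → 𝒢₁.s x = 𝒢₁.r y →
      φ g (𝒢₁.mul x y) * c₁ x y =
        φ g x * φ (M.res g x) y * c₁ (M.act g x) (M.act (M.res g x) y))
    (hCC3 : ∀ g h x, 𝒢₂.s g = 𝒢₂.r h → 𝒢₂.s h = 𝒢₁.r x →
      φ (𝒢₂.mul g h) x * c₂ g h =
        φ h x * φ g (M.act h x) * c₂ (M.res g (M.act h x)) (M.res h x)) :
    -- conclusion: `zsCocycle` is a normalized 2-cocycle on `𝒢₁ ⋈ 𝒢₂`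
    (∀ p : G₁ × G₂, 𝒢₁.s p.1 = 𝒢₂.r p.2 →
      zsCocycle 𝒢₁ 𝒢₂ M c₁ c₂ φ (𝒢₁.unit (𝒢₁.r p.1), 𝒢₂.unit (𝒢₁.r p.1)) p = 1) ∧
    (∀ p : G₁ × G₂, 𝒢₁.s p.1 = 𝒢₂.r p.2 →
      zsCocycle 𝒢₁ 𝒢₂ M c₁ c₂ φ p (𝒢₁.unit (𝒢₂.s p.2), 𝒢₂.unit (𝒢₂.s p.2)) = 1) ∧
    (∀ p q k : G₁ × G₂,
      𝒢₁.s p.1 = 𝒢₂.r p.2 → 𝒢₁.s q.1 = 𝒢₂.r q.2 → 𝒢₁.s k.1 = 𝒢₂.r k.2 →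
      𝒢₂.s p.2 = 𝒢₁.r q.1 → 𝒢₂.s q.2 = 𝒢₁.r k.1 →
      zsCocycle 𝒢₁ 𝒢₂ M c₁ c₂ φ p (zsMul 𝒢₁ 𝒢₂ M q k) *
          zsCocycle 𝒢₁ 𝒢₂ M c₁ c₂ φ q k =
        zsCocycle 𝒢₁ 𝒢₂ M c₁ c₂ φ (zsMul 𝒢₁ 𝒢₂ M p q) k *
          zsCocycle 𝒢₁ 𝒢₂ M c₁ c₂ φ p q) := by
  obtain ⟨hCC1a, hCC1b⟩ := hCC1
  refine ⟨?_, ?_, ?_⟩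
  · -- left normalization
    rintro ⟨x, g⟩ hp
    simp only [zsCocycle]
    rw [M.zs3 x, M.res_unit x, h1norm₁ x, hCC1a x, hp, h2norm₁ g]
    simp
  · -- right normalization
    rintro ⟨x, g⟩ hp
    simp only [zsCocycle] at *
    rw [M.act_unit g, M.zs6 g, ← hp, h1norm₂ x, hCC1b g, h2norm₂ g]
    simp
  · -- the cocycle identity
    rintro ⟨x₁, g₁⟩ ⟨x₂, g₂⟩ ⟨x₃, g₃⟩ hp hq hk hpq hqk
    simp only [zsCocycle, zsMul] at *
    set a := M.act g₁ x₂ with ha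
    set h := M.res g₁ x₂ with hh
    set y := M.act g₂ x₃ with hy
    set b := M.act h y with hb
    set h' := M.res h y with hh'
    set m := M.res g₂ x₃ with hm
    -- composability facts
    have hsh' : 𝒢₂.s h = 𝒢₁.s x₂ := M.zs5 g₁ x₂ hpq
    have hshg₂ : 𝒢₂.s h = 𝒢₂.r g₂ := hsh'.trans hq
    have hry : 𝒢₁.r y = 𝒢₂.r g₂ := M.zs2 g₂ x₃ hqk
    have hshy : 𝒢₂.s h = 𝒢₁.r y := hshg₂.trans hry.symm
    have hx₂y : 𝒢₁.s x₂ = 𝒢₁.r y := hq.trans hry.symm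
    have hra : 𝒢₁.r a = 𝒢₂.r g₁ := M.zs2 g₁ x₂ hpq
    have hx₁a : 𝒢₁.s x₁ = 𝒢₁.r a := hp.trans hra.symm
    have hsa : 𝒢₁.s a = 𝒢₂.r h := M.zs7 g₁ x₂ hpq
    have hrb : 𝒢₁.r b = 𝒢₂.r h := M.zs2 h y hshy
    have hab : 𝒢₁.s a = 𝒢₁.r b := hsa.trans hrb.symm
    have hsh'y : 𝒢₂.s h' = 𝒢₁.s y := M.zs5 h y hshy
    have hsy : 𝒢₁.s y = 𝒢₂.r m := M.zs7 g₂ x₃ hqk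
    have hh'm : 𝒢₂.s h' = 𝒢₂.r m := hsh'y.trans hsy
    have hsm : 𝒢₂.s m = 𝒢₂.r g₃ := (M.zs5 g₂ x₃ hqk).trans hk
    -- structural rewrites
    have e₁ : M.act g₁ (𝒢₁.mul x₂ y) = 𝒢₁.mul a b := M.zs8 g₁ x₂ y hpq hx₂y
    have e₂ : M.res g₁ (𝒢₁.mul x₂ y) = h' := M.zs4 g₁ x₂ y hpq hx₂y
    have e₃ : M.act (𝒢₂.mul h g₂) x₃ = b := M.zs1 h g₂ x₃ hshg₂ hqk
    have e₄ : M.res (𝒢₂.mul h g₂) x₃ = 𝒢₂.mul h' m := M.zs9 h g₂ x₃ hshg₂ hqk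
    rw [e₁, e₂, e₃, e₄]
    -- the four algebraic identities
    have H1 := h1coc x₁ a b hx₁a hab
    have H2 := hCC2 g₁ x₂ y hpq hx₂y
    have H3 := hCC3 h g₂ x₃ hshg₂ hqk
    have H4 := h2coc h' m g₃ hh'm hsm
    rw [← hh, ← hb] at H2
    rw [← hy, ← hh', ← hm] at H3
    -- pass to ℂ and cancel
    rw [Circle.ext_iff] at H1 H2 H3 H4 ⊢
    push_cast at H1 H2 H3 H4 ⊢
    have hu : (c₁ a b : ℂ) ≠ 0 := Circle.coe_ne_zero _
    have hW : (c₂ h g₂ : ℂ) ≠ 0 := Circle.coe_ne_zero _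
    apply mul_right_cancel₀ (mul_ne_zero hu hW)
    set A := (c₁ x₁ (𝒢₁.mul a b) : ℂ)
    set B := (φ g₁ (𝒢₁.mul x₂ y) : ℂ)
    set C := (c₂ h' (𝒢₂.mul m g₃) : ℂ)
    set D := (c₁ x₂ y : ℂ)
    set E := (φ g₂ x₃ : ℂ)
    set F := (c₂ m g₃ : ℂ)
    set P := (c₁ (𝒢₁.mul x₁ a) b : ℂ)
    set Q := (φ (𝒢₂.mul h g₂) x₃ : ℂ)
    set S := (c₂ (𝒢₂.mul h' m) g₃ : ℂ)
    set T := (c₁ x₁ a : ℂ)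
    set V := (φ g₁ x₂ : ℂ)
    set W := (c₂ h g₂ : ℂ)
    set u := (c₁ a b : ℂ)
    set w := (φ h y : ℂ)
    set z := (c₂ h' m : ℂ)
    -- H1 : A * u = P * T ; H2 : B * D = V * w * u ;
    -- H3 : Q * W = E * w * z ; H4 : C * F = S * z
    linear_combination (B * D * C * F * E * W) * H1 + (P * T * C * F * E * W) * H2
      - (P * T * V * u * S * W) * H3 + (P * T * V * w * u * E * W) * H4
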